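/- arXiv:2310.03519 — 5 statements merged into one kernel-verified Lean document; each statement's English description precedes it below -/
import Mathlib

section
/- Let α, β > -1 be real with β ≠ 0, and H_{α,β}(ξ) = β ∑_{n≥0} (-1)^n/(n+β) · C(α+1,n) ξ^n for |ξ|<1. Then (α+β+2)·H_{α+1,β}(ξ) = ξ(1-ξ)·H'_{α,β}(ξ) + (α+β+2-βξ)·H_{α,β}(ξ) for ξ ∈ (-1,1). -/
/-- Generalized binomial coefficient `C(a, n) = a (a-1) ⋯ (a-n+1) / n!`. -/
noncomputable def genBinom (a : ℝ) (n : ℕ) : ℝ :=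
  (∏ i ∈ Finset.range n, (a - i)) / n.factorial

/-- `H_{α,β}(ξ) = β ∑_{n≥0} (-1)^n/(n+β) C(α+1,n) ξ^n`. -/
noncomputable def Hab (α β : ℝ) (ξ : ℝ) : ℝ :=
  β * ∑' n : ℕ, ((-1) ^ n / (n + β)) * genBinom (α + 1) n * ξ ^ n

/-!
Let `c_n = β (-1)ⁿ C(α+1,n) / (n+β)` be the coefficients of `H_{α,β}` and `c'_n` those of
`H_{α+1,β}`. Pascal's rule `C(α+2,n+1) = C(α+1,n+1) + C(α+1,n)` and
`(n+1) C(α+1,n+1) = (α+1-n) C(α+1,n)` give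
`(α+β+2) c'_{n+1} = (n+1+α+β+2) c_{n+1} - (n+β) c_n`, and `c'_0 = c_0`. Since
`ξ H'_{α,β}(ξ) = ∑ n c_n ξⁿ`, this is the claimed identity read coefficientwise. Termwise
manipulation is legitimate because `|c_n| ≤ M |C(α+1,n)|`, so both series inherit from the
binomial series a radius of convergence at least `1`.
-/

open FormalMultilinearSeries

theorem FormalMultilinearSeries.hasSum_nat_mul_ofScalars_deriv {𝕜 : Type*}
    [NontriviallyNormedField 𝕜] [CompleteSpace 𝕜] {c : ℕ → 𝕜} {x : 𝕜}
    (hx : ‖x‖ₑ < (ofScalars 𝕜 c).radius) :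
    HasSum (fun n => n * c n * x ^ n) (x * deriv (ofScalarsSum c) x) := by
  set p := ofScalars 𝕜 c
  -- `derivSeries_apply_diag` only describes the derivative series evaluated in direction `x`.
  have hderiv : x * deriv (ofScalarsSum c) x = p.derivSeries.sum x x := by
    rw [ofScalarsSum, (p.hasFDerivAt_sum hx).hasDerivAt.deriv, ← smul_eq_mul, ← map_smul,
      smul_eq_mul, mul_one]
  have hsum := (p.derivSeries.hasSum (x := x) (by
    simpa using hx.trans_le p.radius_le_radius_derivSeries)).mapL
    (ContinuousLinearMap.apply 𝕜 𝕜 x)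
  simp only [ContinuousLinearMap.apply_apply, derivSeries_apply_diag, p, ofScalars_apply_eq,
    nsmul_eq_mul, smul_eq_mul] at hsum
  rw [hderiv, ← hasSum_nat_add_iff' 1]
  simpa [mul_assoc] using hsum

theorem FormalMultilinearSeries.radius_ofScalars_le_of_norm_le {𝕜 E : Type*}
    [NontriviallyNormedField 𝕜] [NormedRing E] [NormedAlgebra 𝕜 E] [NormOneClass E]
    {c d : ℕ → 𝕜} (M : 𝕜) (h : ∀ n, ‖c n‖ ≤ ‖M‖ * ‖d n‖) :
    (ofScalars E d).radius ≤ (ofScalars E c).radius :=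
  calc (ofScalars E d).radius ≤ (M • ofScalars E d).radius := radius_le_smul
    _ = (ofScalars E (M • d)).radius := by rw [ofScalars_smul]
    _ ≤ (ofScalars E c).radius :=
      radius_le_of_le fun n => by simpa [ofScalars_norm, norm_mul] using h n

theorem hasSum_of_succ_eq_sub_mul {R : Type*} [Ring R] [TopologicalSpace R] [IsTopologicalRing R]
    {f g h : ℕ → R} {F G x : R} (hf : HasSum f F) (hg : HasSum g G) (h0 : h 0 = f 0)
    (hsucc : ∀ n, h (n + 1) = f (n + 1) - x * g n) : HasSum h (F - x * G) := by
  rw [← hasSum_nat_add_iff' 1]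
  convert ((hasSum_nat_add_iff' 1).2 hf).sub (hg.mul_left x) using 1
  · exact funext hsucc
  · rw [Finset.sum_range_one, Finset.sum_range_one, h0]
    abel

theorem genBinom_eq_choose (a : ℝ) (n : ℕ) : genBinom a n = Ring.choose a n := by
  rw [genBinom, Ring.choose_eq_smul, smul_eq_mul, ← Polynomial.aeval_eq_smeval,
    Polynomial.aeval_def, ← Polynomial.eval_map, descPochhammer_map,
    descPochhammer_eval_eq_prod_range, div_eq_inv_mul]

theorem succ_mul_genBinom_succ (a : ℝ) (n : ℕ) :
    (n + 1) * genBinom a (n + 1) = (a - n) * genBinom a n := by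
  simp only [genBinom, Finset.prod_range_succ, Nat.factorial_succ]
  push_cast
  field_simp

theorem genBinom_succ_succ (a : ℝ) (n : ℕ) :
    genBinom (a + 1) (n + 1) = genBinom a n + genBinom a (n + 1) := by
  simp only [genBinom_eq_choose, Ring.choose_succ_succ]

theorem abs_inv_natCast_add_le {β : ℝ} (hβ : -1 < β) (n : ℕ) :
    |((n : ℝ) + β)⁻¹| ≤ |β|⁻¹ + (1 + β)⁻¹ := by
  have hβ1 : 0 < 1 + β := by linarith
  rcases n with _ | n
  · simpa using inv_nonneg.2 hβ1.le
  · have h : 1 + β ≤ ((n + 1 : ℕ) : ℝ) + β := by push_cast; linarith [n.cast_nonneg (α := ℝ)]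
    rw [abs_inv, abs_of_pos (hβ1.trans_le h)]
    exact (inv_anti₀ hβ1 h).trans (le_add_of_nonneg_left (inv_nonneg.2 (abs_nonneg _)))

theorem natCast_add_ne_zero {β : ℝ} (hβ : -1 < β) (hβ0 : β ≠ 0) (n : ℕ) : (n : ℝ) + β ≠ 0 := by
  rcases n with _ | n
  · simpa using hβ0
  · push_cast; linarith [n.cast_nonneg (α := ℝ)]

noncomputable def habCoeff (α β : ℝ) (n : ℕ) : ℝ :=
  β * ((-1) ^ n / (n + β) * genBinom (α + 1) n)

theorem Hab_eq_ofScalarsSum (α β : ℝ) : Hab α β = ofScalarsSum (habCoeff α β) := by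
  ext ξ
  rw [ofScalars_sum_eq, Hab, ← tsum_mul_left]
  exact tsum_congr fun n => by simp only [habCoeff, smul_eq_mul]; ring

theorem one_le_radius_habCoeff (α : ℝ) {β : ℝ} (hβ : -1 < β) :
    1 ≤ (ofScalars ℝ (habCoeff α β)).radius := by
  refine (binomialSeries_radius_ge_one (a := α + 1)).trans (radius_ofScalars_le_of_norm_le
    (d := fun n => Ring.choose (α + 1) n) (β * (|β|⁻¹ + (1 + β)⁻¹)) fun n => ?_)
  have h := abs_inv_natCast_add_le hβ n
  simp only [habCoeff, Real.norm_eq_abs, abs_mul, div_eq_mul_inv, abs_pow, abs_neg, abs_one,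
    one_pow, one_mul, genBinom_eq_choose]
  have hM : 0 ≤ |β|⁻¹ + (1 + β)⁻¹ := add_nonneg (by positivity) (inv_nonneg.2 (by linarith))
  rw [abs_of_nonneg hM, mul_assoc]
  gcongr

theorem habCoeff_succ (α : ℝ) {β : ℝ} (hβ : -1 < β) (hβ0 : β ≠ 0) (n : ℕ) :
    (α + β + 2) * habCoeff (α + 1) β (n + 1) =
      (n + 1 + (α + β + 2)) * habCoeff α β (n + 1) - (n + β) * habCoeff α β n := by
  have h0 := natCast_add_ne_zero hβ hβ0 n
  have h1 := natCast_add_ne_zero hβ hβ0 (n + 1)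
  push_cast at h1
  have hrec := succ_mul_genBinom_succ (α + 1) n
  simp only [habCoeff, genBinom_succ_succ (α + 1) n, pow_succ]
  push_cast
  field_simp
  linear_combination hrec

theorem hasSum_Hab (a : ℝ) {β ξ : ℝ} (hβ : -1 < β) (hξ : ‖ξ‖ₑ < 1) :
    HasSum (fun n => habCoeff a β n * ξ ^ n) (Hab a β ξ) := by
  rw [Hab_eq_ofScalarsSum, ofScalarsSum]
  simpa only [ofScalars_apply_eq, smul_eq_mul] using (ofScalars ℝ (habCoeff a β)).hasSum
    (x := ξ) (by simpa using hξ.trans_le (one_le_radius_habCoeff a hβ))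

theorem hasSum_nat_mul_habCoeff (α : ℝ) {β ξ : ℝ} (hβ : -1 < β) (hξ : ‖ξ‖ₑ < 1) :
    HasSum (fun n => n * habCoeff α β n * ξ ^ n) (ξ * deriv (Hab α β) ξ) := by
  rw [Hab_eq_ofScalarsSum]
  exact hasSum_nat_mul_ofScalars_deriv (hξ.trans_le (one_le_radius_habCoeff α hβ))

theorem Hab_step_identity_general (α β : ℝ) (hβ : -1 < β) (hβ0 : β ≠ 0)
    (ξ : ℝ) (hξ : ξ ∈ Set.Ioo (-1 : ℝ) 1) :
    (α + β + 2) * Hab (α + 1) β ξ =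
      ξ * (1 - ξ) * deriv (Hab α β) ξ + (α + β + 2 - β * ξ) * Hab α β ξ := by
  have hξ1 : ‖ξ‖ₑ < 1 := by simpa [← ofReal_norm, abs_lt] using hξ
  set K := α + β + 2
  have h0 := hasSum_Hab α hβ hξ1
  have h1 := hasSum_nat_mul_habCoeff α hβ hξ1
  have hshift : HasSum (fun n => K * (habCoeff (α + 1) β n * ξ ^ n))
      ((ξ * deriv (Hab α β) ξ + K * Hab α β ξ) - ξ * (ξ * deriv (Hab α β) ξ + β * Hab α β ξ)) :=
    hasSum_of_succ_eq_sub_mul (h1.add (h0.mul_left K)) (h1.add (h0.mul_left β))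
      (by simp [habCoeff, genBinom])
      (fun n => by push_cast; linear_combination ξ ^ (n + 1) * habCoeff_succ α hβ hβ0 n)
  linear_combination ((hasSum_Hab (α + 1) hβ hξ1).mul_left K).unique hshift

theorem Hab_step_identity (α β : ℝ) (hα : -1 < α) (hβ : -1 < β) (hβ0 : β ≠ 0)
    (ξ : ℝ) (hξ : ξ ∈ Set.Ioo (-1 : ℝ) 1) :
    (α + β + 2) * Hab (α + 1) β ξ =
      ξ * (1 - ξ) * deriv (Hab α β) ξ + (α + β + 2 - β * ξ) * Hab α β ξ :=
  Hab_step_identity_general α β hβ hβ0 ξ hξ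
end

section
/- For every natural number α, every real β with -1 < β ≤ 0, β ≠ 0, and every t ∈ [0,1), the finite sum H_{α,β}(t) = β ∑_{n=0}^{α+1} ((-t)^n/(n+β)) · C(α+1, n) satisfies H_{α,β}(t) ≥ 1. -/
/-- For `α ∈ ℕ`, the finite sum `H_{α,β}(t) = β ∑_{n=0}^{α+1} (-t)^n/(n+β) C(α+1,n)`. -/
noncomputable def Hfin (α : ℕ) (β t : ℝ) : ℝ :=
  β * ∑ n ∈ Finset.range (α + 2), (-t) ^ n / (n + β) * (Nat.choose (α + 1) n)

/-!
Splitting off the term `n = 0` gives `H_{α,β}(t) = 1 + β S(t)` with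
`S(t) = ∑_{n=1}^{α+1} (-t)^n / (n + β) C(α+1,n)`, so it suffices that `S(t) ≤ 0`.
Since `n + β > 0` for `n ≥ 1`, the function `G(x) = x^β S(x)` extends continuously by `G(0) = 0`,
and by the binomial theorem `G'(x) = x^(β-1) ((1-x)^(α+1) - 1) ≤ 0` on `(0, 2)`.
Hence `G ≤ 0` on `[0, 2]`.
-/

open Finset Real

noncomputable def HfinTail (α : ℕ) (β t : ℝ) : ℝ :=
  ∑ n ∈ Ico 1 (α + 2), (-t) ^ n / (n + β) * (Nat.choose (α + 1) n)

theorem Hfin_eq_one_add_mul_HfinTail {β : ℝ} (hβ : β ≠ 0) (α : ℕ) (t : ℝ) :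
    Hfin α β t = 1 + β * HfinTail α β t := by
  rw [Hfin, HfinTail, range_eq_Ico, sum_eq_sum_Ico_succ_bot (by omega)]
  simp [mul_add, hβ]

theorem one_sub_pow_sub_one_eq_sum {R : Type*} [CommRing R] (x : R) (m : ℕ) :
    (1 - x) ^ m - 1 = ∑ n ∈ Ico 1 (m + 1), (-x) ^ n * m.choose n := by
  rw [sub_eq_iff_eq_add, show 1 - x = -x + 1 by ring, add_pow, range_eq_Ico,
    sum_eq_sum_Ico_succ_bot (by omega)]
  simp [add_comm]

theorem HfinTail_zero (α : ℕ) (β : ℝ) : HfinTail α β 0 = 0 :=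
  sum_eq_zero fun n hn => by
    rw [neg_zero, zero_pow (by simp at hn; omega), zero_div, zero_mul]

noncomputable def scaledHfinTail (α : ℕ) (β x : ℝ) : ℝ :=
  ∑ n ∈ Ico 1 (α + 2), (-1) ^ n / (n + β) * (Nat.choose (α + 1) n) * x ^ ((n : ℝ) + β)

section ScaledTail

variable {α : ℕ} {β : ℝ}

theorem natCast_add_pos_of_mem_Ico (hβ : -1 < β) {n : ℕ} (hn : n ∈ Ico 1 (α + 2)) :
    0 < (n : ℝ) + β := by
  have : (1 : ℝ) ≤ n := by exact_mod_cast (mem_Ico.1 hn).1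
  linarith

theorem scaledHfinTail_eq {x : ℝ} (hx : 0 < x) :
    scaledHfinTail α β x = x ^ β * HfinTail α β x := by
  rw [scaledHfinTail, HfinTail, mul_sum]
  refine sum_congr rfl fun n _ => ?_
  rw [rpow_add hx, rpow_natCast, neg_pow]
  ring

theorem scaledHfinTail_zero (hβ : -1 < β) : scaledHfinTail α β 0 = 0 :=
  sum_eq_zero fun n hn => by
    rw [zero_rpow (natCast_add_pos_of_mem_Ico hβ hn).ne', mul_zero]

theorem continuous_scaledHfinTail (hβ : -1 < β) : Continuous (scaledHfinTail α β) :=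
  continuous_finsetSum _ fun _ hn =>
    continuous_const.mul <| continuous_iff_continuousAt.2 fun x =>
      continuousAt_rpow_const x _ (Or.inr (natCast_add_pos_of_mem_Ico hβ hn).le)

theorem hasDerivAt_scaledHfinTail (hβ : -1 < β) {x : ℝ} (hx : 0 < x) :
    HasDerivAt (scaledHfinTail α β) (x ^ (β - 1) * ((1 - x) ^ (α + 1) - 1)) x := by
  have hterm : ∀ n ∈ Ico 1 (α + 2), HasDerivAt
      (fun y => (-1) ^ n / (n + β) * (Nat.choose (α + 1) n) * y ^ ((n : ℝ) + β))
      ((-1) ^ n * (Nat.choose (α + 1) n) * x ^ ((n : ℝ) + β - 1)) x := by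
    intro n hn
    have h := (hasDerivAt_rpow_const (p := (n : ℝ) + β) (Or.inl hx.ne')).const_mul
      ((-1) ^ n / (n + β) * (Nat.choose (α + 1) n))
    have hne := (natCast_add_pos_of_mem_Ico hβ hn).ne'
    exact h.congr_deriv (by field_simp)
  refine (HasDerivAt.fun_sum hterm).congr_deriv ?_
  symm
  rw [one_sub_pow_sub_one_eq_sum, mul_sum]
  refine sum_congr rfl fun n _ => ?_
  rw [show (n : ℝ) + β - 1 = n + (β - 1) by ring, rpow_add hx, rpow_natCast, neg_pow]
  ring

theorem antitoneOn_scaledHfinTail (hβ : -1 < β) :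
    AntitoneOn (scaledHfinTail α β) (Set.Icc 0 2) := by
  refine antitoneOn_of_hasDerivWithinAt_nonpos (convex_Icc 0 2)
    (f' := fun x => x ^ (β - 1) * ((1 - x) ^ (α + 1) - 1))
    (continuous_scaledHfinTail hβ).continuousOn
    (fun x hx => ?_) fun x hx => ?_ <;> rw [interior_Icc] at hx
  · exact (hasDerivAt_scaledHfinTail hβ hx.1).hasDerivWithinAt
  have hpow : (1 - x) ^ (α + 1) ≤ 1 := calc
    (1 - x) ^ (α + 1) ≤ |1 - x| ^ (α + 1) := abs_pow (1 - x) (α + 1) ▸ le_abs_self _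
    _ ≤ 1 := pow_le_one₀ (abs_nonneg _) (abs_le.2 ⟨by linarith [hx.2], by linarith [hx.1]⟩)
  exact mul_nonpos_of_nonneg_of_nonpos (rpow_pos_of_pos hx.1 _).le (by linarith)

end ScaledTail

theorem HfinTail_nonpos {α : ℕ} {β t : ℝ} (hβ : -1 < β) (ht : t ∈ Set.Icc (0 : ℝ) 2) :
    HfinTail α β t ≤ 0 := by
  rcases ht.1.eq_or_lt with rfl | ht0
  · exact (HfinTail_zero α β).le
  have hG : scaledHfinTail α β t ≤ 0 :=
    scaledHfinTail_zero (α := α) hβ ▸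
      antitoneOn_scaledHfinTail hβ (Set.left_mem_Icc.2 (by norm_num)) ht ht.1
  rw [scaledHfinTail_eq ht0] at hG
  exact nonpos_of_mul_nonpos_right hG (rpow_pos_of_pos ht0 β)

theorem Hfin_ge_one (α : ℕ) (β : ℝ) (hβ : -1 < β) (hβ0 : β ≤ 0) (hβne : β ≠ 0)
    (t : ℝ) (ht : t ∈ Set.Ico (0 : ℝ) 1) :
    1 ≤ Hfin α β t := by
  have hS : HfinTail α β t ≤ 0 := HfinTail_nonpos hβ ⟨ht.1, by linarith [ht.2]⟩
  rw [Hfin_eq_one_add_mul_HfinTail hβne]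
  linarith [mul_nonneg_of_nonpos_of_nonpos hβ0 hS]
end

section
/- For every natural number α, every real β with -1 < β < 0, and every t ∈ [0,1), one has 0 ≤ H_{α,β+1}(t) ≤ H_{α,β}(t), where H_{α,β}(t) = β ∑_{n=0}^{α+1} ((-t)^n/(n+β)) · C(α+1, n) (and H_{α,β+1} is defined with β+1 in place of β). -/
open Finset intervalIntegral

theorem integral_rpow_mul_one_sub_mul_pow {γ : ℝ} (hγ : -1 < γ) (t : ℝ) (m : ℕ) :
    ∫ x in (0 : ℝ)..1, x ^ γ * (1 - t * x) ^ m
      = ∑ k ∈ range (m + 1), (-t) ^ k / (k + γ + 1) * m.choose k := by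
  have hexp (k : ℕ) : -1 < γ + k := by linarith [k.cast_nonneg (α := ℝ)]
  calc ∫ x in (0 : ℝ)..1, x ^ γ * (1 - t * x) ^ m
      = ∫ x in (0 : ℝ)..1, ∑ k ∈ range (m + 1), (-t) ^ k * m.choose k * x ^ (γ + k) := by
        refine integral_congr_Ioo_of_le zero_le_one fun x hx => ?_
        rw [show 1 - t * x = -(t * x) + 1 by ring, add_pow, mul_sum]
        refine sum_congr rfl fun k _ => ?_
        rw [Real.rpow_add_natCast hx.1.ne']
        ring
    _ = ∑ k ∈ range (m + 1), ∫ x in (0 : ℝ)..1, (-t) ^ k * m.choose k * x ^ (γ + k) :=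
        integral_finsetSum fun k _ => (intervalIntegrable_rpow' (hexp k)).const_mul _
    _ = _ := by
        refine sum_congr rfl fun k _ => ?_
        rw [integral_const_mul, integral_rpow (Or.inl (hexp k)), Real.one_rpow,
          Real.zero_rpow (by linarith [hexp k])]
        ring

theorem Hfin_eq_one_sub_pow_add_sum (α : ℕ) {γ : ℝ} (hγ : ∀ n : ℕ, (n : ℝ) + γ ≠ 0) (t : ℝ) :
    Hfin α γ t = (1 - t) ^ (α + 1)
      + (α + 1) * t * ∑ k ∈ range (α + 1), (-t) ^ k / (k + γ + 1) * α.choose k := by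
  have hγ0 : γ ≠ 0 := by simpa using hγ 0
  have hbinom : (1 - t) ^ (α + 1) = ∑ n ∈ range (α + 2), (-t) ^ n * (α + 1).choose n := by
    rw [sub_eq_neg_add, add_pow]
    simp
  suffices Hfin α γ t - (1 - t) ^ (α + 1)
      = (α + 1) * t * ∑ k ∈ range (α + 1), (-t) ^ k / (k + γ + 1) * α.choose k by linarith
  rw [Hfin, hbinom, mul_sum, ← sum_sub_distrib, sum_range_succ', mul_sum]
  simp only [pow_zero, Nat.choose_zero_right, Nat.cast_zero, zero_add, Nat.cast_one,
    mul_one, one_div, mul_inv_cancel₀ hγ0, sub_self, add_zero]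
  refine sum_congr rfl fun k _ => ?_
  have hchoose : ((α + 1 : ℕ) : ℝ) * α.choose k = (α + 1).choose (k + 1) * (k + 1 : ℕ) := by
    exact_mod_cast Nat.add_one_mul_choose_eq α k
  have hk := hγ (k + 1)
  push_cast at hchoose hk ⊢
  rw [show (k : ℝ) + γ + 1 = k + 1 + γ by ring]
  field_simp
  linear_combination (-(-t) ^ k * t) * hchoose

theorem Hfin_eq_one_sub_pow_add_integral (α : ℕ) {γ : ℝ} (hγ : -1 < γ) (hγ0 : γ ≠ 0) (t : ℝ) :
    Hfin α γ t = (1 - t) ^ (α + 1) + (α + 1) * t * ∫ x in (0 : ℝ)..1, x ^ γ * (1 - t * x) ^ α := by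
  refine (Hfin_eq_one_sub_pow_add_sum α (fun n hn => ?_) t).trans ?_
  · rcases n with _ | n
    · exact hγ0 (by simpa using hn)
    · push_cast at hn
      linarith [n.cast_nonneg (α := ℝ)]
  · rw [integral_rpow_mul_one_sub_mul_pow hγ]

theorem one_sub_mul_nonneg_of_mem_Icc {t x : ℝ} (ht : t ≤ 1) (hx : x ∈ Set.Icc (0 : ℝ) 1) :
    0 ≤ 1 - t * x := by
  nlinarith [mul_nonneg (sub_nonneg.2 ht) hx.1, hx.2]

theorem integral_rpow_mul_one_sub_mul_pow_nonneg (γ : ℝ) {t : ℝ} (ht : t ≤ 1) (m : ℕ) :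
    0 ≤ ∫ x in (0 : ℝ)..1, x ^ γ * (1 - t * x) ^ m :=
  integral_nonneg zero_le_one fun _ hx =>
    mul_nonneg (Real.rpow_nonneg hx.1 γ) (pow_nonneg (one_sub_mul_nonneg_of_mem_Icc ht hx) m)

theorem integral_rpow_add_one_mul_one_sub_mul_pow_le {γ : ℝ} (hγ : -1 < γ) {t : ℝ} (ht : t ≤ 1)
    (m : ℕ) :
    ∫ x in (0 : ℝ)..1, x ^ (γ + 1) * (1 - t * x) ^ m
      ≤ ∫ x in (0 : ℝ)..1, x ^ γ * (1 - t * x) ^ m := by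
  have hint {δ : ℝ} (hδ : -1 < δ) :
      IntervalIntegrable (fun x : ℝ => x ^ δ * (1 - t * x) ^ m) MeasureTheory.volume 0 1 :=
    (intervalIntegrable_rpow' hδ).mul_continuousOn (by fun_prop)
  refine integral_mono_on_of_le_Ioo zero_le_one (hint (by linarith)) (hint hγ) fun x hx => ?_
  rw [Real.rpow_add_one hx.1.ne']
  exact mul_le_mul_of_nonneg_right (mul_le_of_le_one_right (Real.rpow_nonneg hx.1.le γ) hx.2.le)
    (pow_nonneg (one_sub_mul_nonneg_of_mem_Icc ht (Set.Ioo_subset_Icc_self hx)) m)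

theorem Hfin_monotone_in_beta (α : ℕ) (β : ℝ) (hβ : -1 < β) (hβ0 : β < 0)
    (t : ℝ) (ht : t ∈ Set.Ico (0 : ℝ) 1) :
    0 ≤ Hfin α (β + 1) t ∧ Hfin α (β + 1) t ≤ Hfin α β t := by
  obtain ⟨ht0, ht1⟩ := ht
  rw [Hfin_eq_one_sub_pow_add_integral α (by linarith) (by linarith) t,
    Hfin_eq_one_sub_pow_add_integral α hβ hβ0.ne t]
  have hcoeff : 0 ≤ ((α : ℝ) + 1) * t := by positivity
  refine ⟨add_nonneg (pow_nonneg (by linarith) _) (mul_nonneg hcoeff ?_), ?_⟩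
  · exact integral_rpow_mul_one_sub_mul_pow_nonneg _ ht1.le α
  · gcongr
    exact integral_rpow_add_one_mul_one_sub_mul_pow_le hβ ht1.le α
end

section
/- Let α > -1, β > -1 with β = β₀ + m, m ∈ ℕ, β₀ ∈ (-1,0], and let P_{α,β} denote the orthogonal projection of L²(𝔻, dμ_{α,β}) onto the β-modified Bergman space A²_{α,β}. Then for nonnegative integers s, t with t ≥ s: P_{α,β}(z̄^s z^{t-m}) = ((α+β₀+t+2)_{-s}/(β₀+t+1)_{-s}) · z^{t-s-m}, where (a)_{-s} = Γ(a-s)/Γ(a) is the Pochhammer symbol with negative index; and for t < s, P_{α,β}(z̄^s z^{t-m}) = 0. -/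
/-- The Beta function `B(a,b) = Γ(a)Γ(b)/Γ(a+b)`. -/
noncomputable def Beta (a b : ℝ) : ℝ := Real.Gamma a * Real.Gamma b / Real.Gamma (a + b)

/-- The density of the measure `dμ_{α,β}` with respect to Lebesgue area measure. -/
noncomputable def bergWeight (α β : ℝ) (z : ℂ) : ℝ :=
  (1 / Beta (α + 1) (β + 1)) * Real.rpow ‖z‖ (2 * β) * Real.rpow (1 - ‖z‖ ^ 2) α

/-- Pochhammer symbol with negative index: `(a)_{-s} = Γ(a-s)/Γ(a)`. -/
noncomputable def pochNeg (a : ℝ) (s : ℕ) : ℝ := Real.Gamma (a - s) / Real.Gamma a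

/-!
Rotating `z ↦ a z` with `|a| = 1` preserves the disc and the weight, and multiplies each integrand
by `a ^ (t - s - k)`; choosing `a ^ (t - s - k) = -1` shows that the integral vanishes unless
`k = t - s`. In that case the integrand is radial, and polar coordinates followed by `u = |z|²`
turn it into a positive multiple of `B(t+β₀+1, α+1) - c · B(t-s+β₀+1, α+1)`. The constant
`c = (α+β₀+t+2)_{-s} / (β₀+t+1)_{-s}` is exactly the ratio of these two Beta values, by
`B(a, b) = Γ(a) Γ(b) / Γ(a + b)`.
-/

open MeasureTheory Set Real ComplexConjugate

-- `+ 1 - 1` is the shape of the integrand of `Complex.betaIntegral (a + 1) (b + 1)`.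
lemma ofReal_rpow_mul_one_sub_rpow {x : ℝ} (hx : x ∈ Icc (0 : ℝ) 1) (a b : ℝ) :
    ((x ^ a * (1 - x) ^ b : ℝ) : ℂ)
      = (x : ℂ) ^ ((a : ℂ) + 1 - 1) * (1 - (x : ℂ)) ^ ((b : ℂ) + 1 - 1) := by
  push_cast [Complex.ofReal_cpow hx.1, Complex.ofReal_cpow (sub_nonneg.2 hx.2)]
  simp only [add_sub_cancel_right]

lemma intervalIntegrable_cpow_mul_one_sub_cpow {a b : ℝ} (ha : -1 < a) (hb : -1 < b) :
    IntervalIntegrable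
      (fun x : ℝ => (x : ℂ) ^ ((a : ℂ) + 1 - 1) * (1 - (x : ℂ)) ^ ((b : ℂ) + 1 - 1))
      volume 0 1 :=
  Complex.betaIntegral_convergent (by simp; linarith) (by simp; linarith)

lemma integrableOn_rpow_mul_one_sub_rpow {a b : ℝ} (ha : -1 < a) (hb : -1 < b) :
    IntegrableOn (fun x => x ^ a * (1 - x) ^ b) (Ioo (0 : ℝ) 1) := by
  refine (IntegrableOn.mono_set (intervalIntegrable_cpow_mul_one_sub_cpow ha hb).1.re
    Ioo_subset_Ioc_self).congr_fun (fun x hx => ?_) measurableSet_Ioo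
  dsimp only
  rw [← ofReal_rpow_mul_one_sub_rpow (Ioo_subset_Icc_self hx), RCLike.re_to_complex,
    Complex.ofReal_re]

lemma integral_rpow_mul_one_sub_rpow {a b : ℝ} (ha : -1 < a) (hb : -1 < b) :
    ∫ x in Ioo (0 : ℝ) 1, x ^ a * (1 - x) ^ b = Beta (a + 1) (b + 1) := by
  have hbeta : Beta (a + 1) (b + 1) = (Complex.betaIntegral (a + 1 : ℝ) (b + 1 : ℝ)).re :=
    ProbabilityTheory.beta_eq_betaIntegralReal _ _ (by linarith) (by linarith)
  rw [hbeta, Complex.betaIntegral, intervalIntegral.integral_of_le zero_le_one,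
    ← RCLike.re_to_complex, ← integral_re, ← integral_Ioc_eq_integral_Ioo]
  · refine setIntegral_congr_fun measurableSet_Ioc fun x hx => ?_
    push_cast
    rw [← ofReal_rpow_mul_one_sub_rpow (Ioc_subset_Icc_self hx), RCLike.re_to_complex,
      Complex.ofReal_re]
  · push_cast
    exact (intervalIntegrable_cpow_mul_one_sub_cpow ha hb).1

lemma beta_eq_pochNeg_div_pochNeg_mul_beta {a b : ℝ} (s : ℕ) (hb : 0 < b) (has : 0 < a - s) :
    Beta a b = pochNeg (a + b) s / pochNeg a s * Beta (a - s) b := by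
  have ha : 0 < a := by linarith [(Nat.cast_nonneg s : (0 : ℝ) ≤ s)]
  have h1 := Gamma_pos_of_pos ha
  have h2 := Gamma_pos_of_pos hb
  have h3 := Gamma_pos_of_pos (add_pos ha hb)
  have h4 := Gamma_pos_of_pos has
  have h5 := Gamma_pos_of_pos (add_pos has hb)
  unfold Beta pochNeg
  rw [show a + b - s = a - s + b by ring]
  field_simp

lemma integral_ball_comp_norm_sq {E : Type*} [NormedAddCommGroup E] [NormedSpace ℝ E]
    (h : ℝ → E) :
    ∫ z in Metric.ball (0 : ℂ) 1, h (‖z‖ ^ 2) = π • ∫ u in Ioo (0 : ℝ) 1, h u := by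
  have hball : ∫ z in Metric.ball (0 : ℂ) 1, h (‖z‖ ^ 2)
      = ∫ z : ℂ, (Iio 1).indicator (fun r => h (r ^ 2)) ‖z‖ := by
    rw [← integral_indicator measurableSet_ball]
    congr 1 with z
    simp [indicator, Metric.mem_ball]
  have hsub : ∫ u in Ioo (0 : ℝ) 1, h u
      = (2 : ℝ) • ∫ r in Ioi (0 : ℝ), r • (Iio 1).indicator (fun r => h (r ^ 2)) r := by
    rw [← Ioi_inter_Iio, ← setIntegral_indicator measurableSet_Iio,
      ← integral_comp_rpow_Ioi_of_pos two_pos, ← integral_smul]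
    refine setIntegral_congr_fun measurableSet_Ioi fun r (hr : 0 < r) => ?_
    have hr1 : r ^ 2 < 1 ↔ r < 1 := pow_lt_one_iff_of_nonneg hr.le two_ne_zero
    norm_num [indicator, hr1, smul_smul]
  rw [hball, integral_fun_norm_addHaar, hsub, Complex.finrank_real_complex]
  simp [measureReal_def, Complex.volume_ball, ← Nat.cast_smul_eq_nsmul ℝ, smul_smul, mul_comm]

lemma setIntegral_ball_comp_rotation (a : Circle) (r : ℝ) (f : ℂ → ℂ) :
    ∫ z in Metric.ball (0 : ℂ) r, f (a * z) = ∫ z in Metric.ball (0 : ℂ) r, f z := by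
  have hpre : rotation a ⁻¹' Metric.ball 0 r = Metric.ball 0 r := by
    ext z
    simp only [mem_preimage, rotation_apply, mem_ball_zero_iff, norm_mul, Circle.norm_coe,
      one_mul]
  simpa [hpre] using (rotation a).measurePreserving.setIntegral_preimage_emb
    (rotation a).toHomeomorph.measurableEmbedding f (Metric.ball 0 r)

lemma exists_circle_zpow_eq_neg_one {n : ℤ} (hn : n ≠ 0) :
    ∃ a : Circle, (a : ℂ) ^ n = -1 := by
  refine ⟨Circle.exp (π / n), ?_⟩
  rw [Circle.coe_exp, ← Complex.exp_int_mul, ← Complex.exp_pi_mul_I]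
  congr 1
  push_cast
  field_simp

lemma setIntegral_ball_eq_zero_of_rotate {r : ℝ} {n : ℤ} (hn : n ≠ 0) {f : ℂ → ℂ}
    (hf : ∀ (a : Circle) (z : ℂ), f (a * z) = a ^ n * f z) :
    ∫ z in Metric.ball (0 : ℂ) r, f z = 0 := by
  obtain ⟨a, han⟩ := exists_circle_zpow_eq_neg_one hn
  have hrot : ∫ z in Metric.ball (0 : ℂ) r, f (a * z)
      = -∫ z in Metric.ball (0 : ℂ) r, f z := by
    simp_rw [hf, integral_const_mul, han, neg_one_mul]
  rw [setIntegral_ball_comp_rotation] at hrot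
  exact CharZero.eq_neg_self_iff.mp hrot

lemma conj_coe_circle (a : Circle) : conj (a : ℂ) = (a : ℂ)⁻¹ := by
  rw [← Circle.coe_inv_eq_conj, Circle.coe_inv]

lemma zpow_mul_conj_zpow_circle_mul (a : Circle) (z : ℂ) (p q : ℤ) :
    (a * z) ^ p * conj ((a * z) ^ q) = (a : ℂ) ^ (p - q) * (z ^ p * conj (z ^ q)) := by
  simp only [mul_zpow, map_mul, map_zpow₀, conj_coe_circle, inv_zpow,
    zpow_sub₀ (Circle.coe_ne_zero a)]
  ring

lemma conj_pow_mul_zpow_mul_conj_zpow_circle_mul (a : Circle) (z : ℂ) (s : ℕ) (p q : ℤ) :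
    conj (a * z) ^ s * (a * z) ^ p * conj ((a * z) ^ q)
      = (a : ℂ) ^ (p - s - q) * (conj z ^ s * z ^ p * conj (z ^ q)) := by
  simp only [mul_zpow, map_mul, mul_pow, map_zpow₀, conj_coe_circle, inv_zpow, inv_pow,
    zpow_sub₀ (Circle.coe_ne_zero a), zpow_natCast]
  ring

lemma bergWeight_circle_mul (α β : ℝ) (a : Circle) (z : ℂ) :
    bergWeight α β (a * z) = bergWeight α β z := by
  simp only [bergWeight, norm_mul, Circle.norm_coe, one_mul]

lemma zpow_mul_conj_zpow_self (z : ℂ) (p : ℤ) :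
    z ^ p * conj (z ^ p) = ((‖z‖ ^ 2) ^ p : ℝ) := by
  rw [map_zpow₀, ← mul_zpow, Complex.mul_conj, Complex.normSq_eq_norm_sq]
  push_cast; rfl

lemma conj_pow_mul_zpow_mul_conj_zpow {z : ℂ} (hz : z ≠ 0) (s : ℕ) {p q : ℤ}
    (hpq : q + s = p) :
    conj z ^ s * z ^ p * conj (z ^ q) = ((‖z‖ ^ 2) ^ p : ℝ) := by
  rw [← zpow_mul_conj_zpow_self, ← hpq, map_zpow₀, map_zpow₀, zpow_add₀ hz,
    zpow_add₀ ((map_ne_zero _).2 hz), zpow_natCast, zpow_natCast]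
  ring

lemma zpow_norm_sq_mul_bergWeight (α β : ℝ) {z : ℂ} (hz : z ≠ 0) (n : ℤ) :
    (‖z‖ ^ 2) ^ n * bergWeight α β z
      = (1 / Beta (α + 1) (β + 1)) * ((‖z‖ ^ 2) ^ (n + β) * (1 - ‖z‖ ^ 2) ^ α) := by
  have hz' : 0 < ‖z‖ := norm_pos_iff.2 hz
  rw [bergWeight, rpow_eq_pow, rpow_eq_pow, rpow_add (by positivity), rpow_intCast,
    ← rpow_natCast, ← rpow_mul hz'.le]
  push_cast
  ring

lemma diagonal_integrand_eq {z : ℂ} (hz : z ≠ 0) (α β₀ c : ℝ) (m s t : ℕ) :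
    (conj z ^ s * z ^ ((t : ℤ) - m) - (c : ℂ) * z ^ ((t : ℤ) - s - m))
        * conj (z ^ ((t : ℤ) - s - m)) * ((bergWeight α (β₀ + m) z : ℝ) : ℂ)
      = ((1 / Beta (α + 1) (β₀ + m + 1) * ((‖z‖ ^ 2) ^ (t + β₀) * (1 - ‖z‖ ^ 2) ^ α
          - c * ((‖z‖ ^ 2) ^ (t - s + β₀) * (1 - ‖z‖ ^ 2) ^ α)) : ℝ) : ℂ) := by
  have hX : conj z ^ s * z ^ ((t : ℤ) - m) * conj (z ^ ((t : ℤ) - s - m))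
      = ((‖z‖ ^ 2) ^ ((t : ℤ) - m) : ℝ) := conj_pow_mul_zpow_mul_conj_zpow hz s (by ring)
  have e1 := zpow_norm_sq_mul_bergWeight α (β₀ + m) hz ((t : ℤ) - m)
  have e2 := zpow_norm_sq_mul_bergWeight α (β₀ + m) hz ((t : ℤ) - s - m)
  push_cast at e1 e2
  rw [show (t : ℝ) - m + (β₀ + m) = t + β₀ by ring] at e1
  rw [show (t : ℝ) - s - m + (β₀ + m) = t - s + β₀ by ring] at e2
  calc _ = conj z ^ s * z ^ ((t : ℤ) - m) * conj (z ^ ((t : ℤ) - s - m))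
          * ((bergWeight α (β₀ + m) z : ℝ) : ℂ)
        - c * (z ^ ((t : ℤ) - s - m) * conj (z ^ ((t : ℤ) - s - m))
          * ((bergWeight α (β₀ + m) z : ℝ) : ℂ)) := by ring
    _ = _ := by
      rw [hX, zpow_mul_conj_zpow_self, ← Complex.ofReal_mul, ← Complex.ofReal_mul, e1, e2]
      push_cast
      ring

lemma setIntegral_ball_diagonal {α β₀ : ℝ} (m : ℕ) (hα : -1 < α) (hβ₀ : -1 < β₀)
    {s t : ℕ} (hst : s ≤ t) (c : ℝ) :
    ∫ z in Metric.ball (0 : ℂ) 1,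
      (conj z ^ s * z ^ ((t : ℤ) - m) - (c : ℂ) * z ^ ((t : ℤ) - s - m))
        * conj (z ^ ((t : ℤ) - s - m)) * ((bergWeight α (β₀ + m) z : ℝ) : ℂ)
      = ((π * (1 / Beta (α + 1) (β₀ + m + 1) * (Beta (t + β₀ + 1) (α + 1)
          - c * Beta (t - s + β₀ + 1) (α + 1))) : ℝ) : ℂ) := by
  have hts : (s : ℝ) ≤ t := Nat.cast_le.2 hst
  have hp : -1 < (t : ℝ) + β₀ := by linarith
  have hq : -1 < (t : ℝ) - s + β₀ := by linarith
  calc _ = ∫ z in Metric.ball (0 : ℂ) 1, ((1 / Beta (α + 1) (β₀ + m + 1)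
          * ((‖z‖ ^ 2) ^ (t + β₀) * (1 - ‖z‖ ^ 2) ^ α
            - c * ((‖z‖ ^ 2) ^ (t - s + β₀) * (1 - ‖z‖ ^ 2) ^ α)) : ℝ) : ℂ) := by
        refine setIntegral_congr_ae measurableSet_ball ?_
        filter_upwards [compl_mem_ae_iff.2 (measure_singleton (0 : ℂ))] with z hz _
        exact diagonal_integrand_eq hz α β₀ c m s t
    _ = _ := by
        rw [integral_ball_comp_norm_sq fun u => ((1 / Beta (α + 1) (β₀ + m + 1)
            * (u ^ (t + β₀) * (1 - u) ^ α
              - c * (u ^ (t - s + β₀) * (1 - u) ^ α)) : ℝ) : ℂ),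
          integral_complex_ofReal, integral_const_mul, integral_sub, integral_const_mul,
          integral_rpow_mul_one_sub_rpow hp hα, integral_rpow_mul_one_sub_rpow hq hα]
        · simp
        · exact integrableOn_rpow_mul_one_sub_rpow hp hα
        · exact (integrableOn_rpow_mul_one_sub_rpow hq hα).const_mul c

lemma setIntegral_ball_projection_diagonal {α β₀ : ℝ} (m : ℕ) (hα : -1 < α)
    (hβ₀ : -1 < β₀) {s t : ℕ} (hst : s ≤ t) :
    ∫ z in Metric.ball (0 : ℂ) 1,
      (conj z ^ s * z ^ ((t : ℤ) - m)
          - ((pochNeg (α + β₀ + t + 2) s / pochNeg (β₀ + t + 1) s : ℝ) : ℂ)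
            * z ^ ((t : ℤ) - s - m))
        * conj (z ^ ((t : ℤ) - s - m)) * ((bergWeight α (β₀ + m) z : ℝ) : ℂ) = 0 := by
  have hts : (s : ℝ) ≤ t := Nat.cast_le.2 hst
  have hbeta : Beta (t + β₀ + 1) (α + 1)
      = pochNeg (α + β₀ + t + 2) s / pochNeg (β₀ + t + 1) s
        * Beta (t - s + β₀ + 1) (α + 1) := by
    rw [beta_eq_pochNeg_div_pochNeg_mul_beta s (by linarith)
      (by linarith : 0 < (t : ℝ) + β₀ + 1 - s)]
    ring_nf
  rw [setIntegral_ball_diagonal m hα hβ₀ hst, ← hbeta, sub_self, mul_zero, mul_zero,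
    Complex.ofReal_zero]

lemma setIntegral_ball_projection_offDiagonal (α β : ℝ) {m s t k : ℕ}
    (hk : (k : ℤ) ≠ t - s) (c : ℂ) :
    ∫ z in Metric.ball (0 : ℂ) 1,
      (conj z ^ s * z ^ ((t : ℤ) - m) - c * z ^ ((t : ℤ) - s - m))
        * conj (z ^ ((k : ℤ) - m)) * ((bergWeight α β z : ℝ) : ℂ) = 0 := by
  refine setIntegral_ball_eq_zero_of_rotate (n := t - s - k) (by omega) fun a z => ?_
  have h1 := conj_pow_mul_zpow_mul_conj_zpow_circle_mul a z s (t - m) (k - m)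
  have h2 := zpow_mul_conj_zpow_circle_mul a z (t - s - m) (k - m)
  rw [show (t : ℤ) - m - s - (k - m) = t - s - k by ring] at h1
  rw [show (t : ℤ) - s - m - (k - m) = t - s - k by ring] at h2
  rw [bergWeight_circle_mul]
  linear_combination (bergWeight α β z : ℂ) * h1 - c * (bergWeight α β z : ℂ) * h2

/-- `P_{α,β} f = g` is encoded as the orthogonality of `f - g` in `L²(dμ_{α,β})` to every
monomial `z^{k-m}` spanning `A²_{α,β}`. -/
theorem projection_of_monomials (α β₀ : ℝ) (m : ℕ) (hα : -1 < α)
    (hβ₀ : β₀ ∈ Set.Ioc (-1 : ℝ) 0) (s t : ℕ) :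
    (s ≤ t → ∀ k : ℕ,
      ∫ z in Metric.ball (0 : ℂ) 1,
        (((starRingEnd ℂ) z) ^ s * z ^ ((t : ℤ) - m)
            - ((pochNeg (α + β₀ + t + 2) s / pochNeg (β₀ + t + 1) s : ℝ) : ℂ)
              * z ^ ((t : ℤ) - s - m))
          * (starRingEnd ℂ) (z ^ ((k : ℤ) - m))
          * ((bergWeight α (β₀ + m) z : ℝ) : ℂ) = 0) ∧
    (t < s → ∀ k : ℕ,
      ∫ z in Metric.ball (0 : ℂ) 1,
        ((starRingEnd ℂ) z) ^ s * z ^ ((t : ℤ) - m)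
          * (starRingEnd ℂ) (z ^ ((k : ℤ) - m))
          * ((bergWeight α (β₀ + m) z : ℝ) : ℂ) = 0) := by
  refine ⟨fun hst k => ?_, fun hts k => ?_⟩
  · rcases eq_or_ne (k : ℤ) (t - s) with hk | hk
    · rw [hk]
      exact setIntegral_ball_projection_diagonal m hα hβ₀.1 hst
    · exact setIntegral_ball_projection_offDiagonal α (β₀ + m) hk _
  · simpa only [zero_mul, sub_zero] using
      setIntegral_ball_projection_offDiagonal α (β₀ + m) (m := m) (k := k) (by omega) 0
end

section
/- Let μ be the measure dμ_{α,β} = (1/B(α+1,β+1))|z|^{2β}(1-|z|²)^α dA(z) on the unit disk, with α > -1, β ∈ (-1,0], β ∈ 𝒥_α, and let ν be a finite positive Borel measure on 𝔻. Suppose there exists C > 0 such that ∫|f| dν ≤ C ∫|f| dμ_{α,β} for all f ∈ A¹_{α,β} (ν is a Carleson measure). Then the Toeplitz operator T_ν f(z) = ∫_𝔻 f(w)·conj(K_{α,β}(w,z)) dν(w) is bounded on A²_{α,β}: specifically, for all f, g ∈ A²_{α,β}, |⟨T_ν f, g⟩_{α,β}| ≤ C·‖f‖_{α,β,2}·‖g‖_{α,β,2}.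 -/
/-!
For `f, g ∈ A²_{α,β}` the product `f g` lies in `A¹_{α,β}` by Cauchy–Schwarz in `L²(μ_{α,β})`,
so the Carleson inequality applies to it:
`|⟨T_ν f, g⟩| ≤ ∫ |f g| dν ≤ C ∫ |f g| dμ_{α,β} ≤ C ‖f‖₂ ‖g‖₂`.
-/

open MeasureTheory

/-- Membership in the β-modified Bergman space `A^p_{α,β}`: holomorphic on the punctured
disk and `|f|^p` integrable against `dμ_{α,β}`. -/
def MemA (p α β : ℝ) (f : ℂ → ℂ) : Prop :=
  DifferentiableOn ℂ f (Metric.ball (0 : ℂ) 1 \ {0}) ∧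
    IntegrableOn (fun z => ‖f z‖ ^ p * bergWeight α β z) (Metric.ball (0 : ℂ) 1) volume

section WeightedCauchySchwarz

variable {X : Type*} [MeasurableSpace X] {μ : Measure X}

lemma integral_mul_le_sqrt_mul_sqrt {F G : X → ℝ} (hF : 0 ≤ᵐ[μ] F) (hG : 0 ≤ᵐ[μ] G)
    (hF2 : MemLp F 2 μ) (hG2 : MemLp G 2 μ) :
    ∫ x, F x * G x ∂μ ≤ √(∫ x, F x ^ 2 ∂μ) * √(∫ x, G x ^ 2 ∂μ) := by
  have h := integral_mul_le_Lp_mul_Lq_of_nonneg Real.HolderConjugate.two_two hF hG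
    (by simpa using hF2) (by simpa using hG2)
  simpa only [Real.rpow_two, ← Real.sqrt_eq_rpow] using h

variable {𝕜 : Type*} [NormedDivisionRing 𝕜] {w : X → ℝ} {f g : X → 𝕜}

lemma sq_norm_mul_sqrt_ae_eq (hw0 : 0 ≤ᵐ[μ] w) :
    (fun x ↦ (‖f x‖ * √(w x)) ^ 2) =ᵐ[μ] fun x ↦ ‖f x‖ ^ 2 * w x := by
  filter_upwards [hw0] with x hx
  rw [mul_pow, Real.sq_sqrt hx]

lemma memLp_two_norm_mul_sqrt (hf : AEStronglyMeasurable f μ) (hw : AEStronglyMeasurable w μ)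
    (hw0 : 0 ≤ᵐ[μ] w) (hfw : Integrable (fun x ↦ ‖f x‖ ^ 2 * w x) μ) :
    MemLp (fun x ↦ ‖f x‖ * √(w x)) 2 μ :=
  (memLp_two_iff_integrable_sq (hf.norm.mul (Real.continuous_sqrt.comp_aestronglyMeasurable hw))).2
    (hfw.congr (sq_norm_mul_sqrt_ae_eq hw0).symm)

lemma norm_mul_mul_weight_ae_eq (hw0 : 0 ≤ᵐ[μ] w) :
    (fun x ↦ ‖f x * g x‖ * w x) =ᵐ[μ] fun x ↦ (‖f x‖ * √(w x)) * (‖g x‖ * √(w x)) := by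
  filter_upwards [hw0] with x hx
  rw [norm_mul, mul_mul_mul_comm, Real.mul_self_sqrt hx]

lemma integrable_norm_mul_mul_weight (hf : AEStronglyMeasurable f μ)
    (hg : AEStronglyMeasurable g μ) (hw : AEStronglyMeasurable w μ) (hw0 : 0 ≤ᵐ[μ] w)
    (hfw : Integrable (fun x ↦ ‖f x‖ ^ 2 * w x) μ)
    (hgw : Integrable (fun x ↦ ‖g x‖ ^ 2 * w x) μ) :
    Integrable (fun x ↦ ‖f x * g x‖ * w x) μ :=
  ((memLp_two_norm_mul_sqrt hf hw hw0 hfw).integrable_mul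
    (memLp_two_norm_mul_sqrt hg hw hw0 hgw)).congr (norm_mul_mul_weight_ae_eq hw0).symm

lemma integral_norm_mul_mul_weight_le (hf : AEStronglyMeasurable f μ)
    (hg : AEStronglyMeasurable g μ) (hw : AEStronglyMeasurable w μ) (hw0 : 0 ≤ᵐ[μ] w)
    (hfw : Integrable (fun x ↦ ‖f x‖ ^ 2 * w x) μ)
    (hgw : Integrable (fun x ↦ ‖g x‖ ^ 2 * w x) μ) :
    ∫ x, ‖f x * g x‖ * w x ∂μ ≤ √(∫ x, ‖f x‖ ^ 2 * w x ∂μ) * √(∫ x, ‖g x‖ ^ 2 * w x ∂μ) := by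
  rw [integral_congr_ae (norm_mul_mul_weight_ae_eq hw0)]
  rw [← integral_congr_ae (sq_norm_mul_sqrt_ae_eq (f := f) hw0),
    ← integral_congr_ae (sq_norm_mul_sqrt_ae_eq (f := g) hw0)]
  exact integral_mul_le_sqrt_mul_sqrt (ae_of_all _ fun x ↦ by positivity)
    (ae_of_all _ fun x ↦ by positivity) (memLp_two_norm_mul_sqrt hf hw hw0 hfw)
    (memLp_two_norm_mul_sqrt hg hw hw0 hgw)

end WeightedCauchySchwarz

lemma Beta_pos {a b : ℝ} (ha : 0 < a) (hb : 0 < b) : 0 < Beta a b := by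
  have := Real.Gamma_pos_of_pos ha
  have := Real.Gamma_pos_of_pos hb
  have := Real.Gamma_pos_of_pos (add_pos ha hb)
  unfold Beta
  positivity

section BergmanSpace

open Metric

variable {α β : ℝ}

lemma bergWeight_nonneg (hα : -1 < α) (hβ : -1 < β) {z : ℂ} (hz : ‖z‖ ≤ 1) :
    0 ≤ bergWeight α β z := by
  have hB : 0 < Beta (α + 1) (β + 1) := Beta_pos (by linarith) (by linarith)
  have h1 : 0 ≤ 1 - ‖z‖ ^ 2 := by nlinarith [norm_nonneg z]
  unfold bergWeight
  exact mul_nonneg (mul_nonneg (one_div_pos.2 hB).le (Real.rpow_nonneg (norm_nonneg z) _))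
    (Real.rpow_nonneg h1 _)

lemma measurable_bergWeight : Measurable (bergWeight α β) := by
  unfold bergWeight
  simp only [Real.rpow_eq_pow]
  fun_prop

lemma bergWeight_nonneg_ae_ball (hα : -1 < α) (hβ : -1 < β) :
    0 ≤ᵐ[volume.restrict (ball (0 : ℂ) 1)] bergWeight α β :=
  ae_restrict_of_forall_mem measurableSet_ball fun _ hz ↦
    bergWeight_nonneg hα hβ (mem_ball_zero_iff.1 hz).le

variable {p : ℝ} {f g : ℂ → ℂ}

lemma MemA.aestronglyMeasurable (hf : MemA p α β f) :
    AEStronglyMeasurable f (volume.restrict (ball (0 : ℂ) 1)) := by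
  have hpunct : volume.restrict (ball (0 : ℂ) 1 \ {0}) = volume.restrict (ball 0 1) :=
    Measure.restrict_congr_set (sdiff_null_ae_eq_self (by simp))
  rw [← hpunct]
  exact hf.1.continuousOn.aestronglyMeasurable (measurableSet_ball.diff (measurableSet_singleton 0))

lemma MemA.integrableOn_norm_sq_mul (hf : MemA 2 α β f) :
    IntegrableOn (fun z ↦ ‖f z‖ ^ 2 * bergWeight α β z) (ball 0 1) := by
  simpa only [Real.rpow_two] using hf.2

lemma MemA.mul (hα : -1 < α) (hβ : -1 < β) (hf : MemA 2 α β f) (hg : MemA 2 α β g) :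
    MemA 1 α β (f * g) := by
  refine ⟨hf.1.mul hg.1, ?_⟩
  rw [IntegrableOn]
  simpa only [Real.rpow_one, Pi.mul_apply] using
    integrable_norm_mul_mul_weight hf.aestronglyMeasurable hg.aestronglyMeasurable
      measurable_bergWeight.aestronglyMeasurable (bergWeight_nonneg_ae_ball hα hβ)
      hf.integrableOn_norm_sq_mul hg.integrableOn_norm_sq_mul

end BergmanSpace

theorem toeplitz_bounded_of_carleson_general (α β : ℝ) (hα : -1 < α) (hβ : β ∈ Set.Ioc (-1 : ℝ) 0)
    (ν : Measure ℂ) (C : ℝ) (hC : 0 < C)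
    (hCar : ∀ f : ℂ → ℂ, MemA 1 α β f →
      (∫ z in Metric.ball (0 : ℂ) 1, ‖f z‖ ∂ν)
        ≤ C * ∫ z in Metric.ball (0 : ℂ) 1, ‖f z‖ * bergWeight α β z) :
    ∀ f g : ℂ → ℂ, MemA 2 α β f → MemA 2 α β g →
      ‖∫ z in Metric.ball (0 : ℂ) 1, f z * (starRingEnd ℂ) (g z) ∂ν‖
        ≤ C * Real.sqrt (∫ z in Metric.ball (0 : ℂ) 1, ‖f z‖ ^ 2 * bergWeight α β z)
            * Real.sqrt (∫ z in Metric.ball (0 : ℂ) 1, ‖g z‖ ^ 2 * bergWeight α β z) := by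
  intro f g hf hg
  calc ‖∫ z in Metric.ball (0 : ℂ) 1, f z * (starRingEnd ℂ) (g z) ∂ν‖
      ≤ ∫ z in Metric.ball (0 : ℂ) 1, ‖f z * (starRingEnd ℂ) (g z)‖ ∂ν :=
        norm_integral_le_integral_norm _
    _ = ∫ z in Metric.ball (0 : ℂ) 1, ‖(f * g) z‖ ∂ν := by simp
    _ ≤ C * ∫ z in Metric.ball (0 : ℂ) 1, ‖(f * g) z‖ * bergWeight α β z :=
        hCar _ (hf.mul hα hβ.1 hg)
    _ ≤ C * (√(∫ z in Metric.ball (0 : ℂ) 1, ‖f z‖ ^ 2 * bergWeight α β z)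
          * √(∫ z in Metric.ball (0 : ℂ) 1, ‖g z‖ ^ 2 * bergWeight α β z)) := by
        gcongr
        exact integral_norm_mul_mul_weight_le hf.aestronglyMeasurable hg.aestronglyMeasurable
          measurable_bergWeight.aestronglyMeasurable (bergWeight_nonneg_ae_ball hα hβ.1)
          hf.integrableOn_norm_sq_mul hg.integrableOn_norm_sq_mul
    _ = _ := (mul_assoc _ _ _).symm

theorem toeplitz_bounded_of_carleson (α β : ℝ) (hα : -1 < α) (hβ : β ∈ Set.Ioc (-1 : ℝ) 0)
    (ν : Measure ℂ) [IsFiniteMeasure ν] (C : ℝ) (hC : 0 < C)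
    (hCar : ∀ f : ℂ → ℂ, MemA 1 α β f →
      (∫ z in Metric.ball (0 : ℂ) 1, ‖f z‖ ∂ν)
        ≤ C * ∫ z in Metric.ball (0 : ℂ) 1, ‖f z‖ * bergWeight α β z) :
    ∀ f g : ℂ → ℂ, MemA 2 α β f → MemA 2 α β g →
      ‖∫ z in Metric.ball (0 : ℂ) 1, f z * (starRingEnd ℂ) (g z) ∂ν‖
        ≤ C * Real.sqrt (∫ z in Metric.ball (0 : ℂ) 1, ‖f z‖ ^ 2 * bergWeight α β z)
            * Real.sqrt (∫ z in Metric.ball (0 : ℂ) 1, ‖g z‖ ^ 2 * bergWeight α β z) :=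
  toeplitz_bounded_of_carleson_general α β hα hβ ν C hC hCar
end
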